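/- The operator K satisfies K² = θ₀ (M - N) K. -/

import Mathlib

/-! `K` is supported on the pairs `(ī, i)`, so in an entry of `K²` the summation index `l` runs
once through all of `Fin (M + N)`. In each summand the grading signs collapse, using `[l]² = [l]`
and `[l̄] = [l]`, together with `θ_l² = 1`, to `(-1)^[l]` times the entry of `K`; hence
`K² = (Σ_l (-1)^[l]) K`, and that sum is the superdimension `θ₀ (M - N)`. -/

open Matrix BigOperators Finset

noncomputable section

namespace OspYangian

variable (M N : ℕ) (θ₀ : ℤ)

/-- The grading exponent `[i] ∈ {0,1}`, defined so that `(-1)^[i] = θ₀` for `i < M`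
and `(-1)^[i] = -θ₀` for `M ≤ i < M+N` (0-indexed). -/
def gr (i : Fin (M + N)) : ℕ :=
  if (i : ℕ) < M then (if θ₀ = 1 then 0 else 1) else (if θ₀ = 1 then 1 else 0)

/-- The sign `θ_i`: `+1` for `i < M + N/2`, `-1` otherwise (0-indexed). -/
def th (i : Fin (M + N)) : ℂ :=
  if (i : ℕ) < M + N / 2 then 1 else -1

/-- The conjugate index `ī`: `M+1-i` resp. `2M+N+1-i` in 1-indexed notation. -/
def bar (i : Fin (M + N)) : Fin (M + N) :=
  if _h : (i : ℕ) < M then ⟨M - 1 - (i : ℕ), by omega⟩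
  else ⟨2 * M + N - 1 - (i : ℕ), by have := i.isLt; omega⟩

/-- Coefficient matrices of elements of the graded tensor square of `gl(M|N)`:
the entry at `((i,k),(j,l))` is the coefficient of `E_{ij} ⊗ E_{kl}`. -/
abbrev Mat := Matrix (Fin (M + N) × Fin (M + N)) (Fin (M + N) × Fin (M + N)) ℂ

/-- Multiplication in the graded tensor product algebra:
`(A⊗B)(C⊗D) = (-1)^{[B][C]} AC ⊗ BD` on homogeneous elements. -/
def gmul (A B : Mat M N) : Mat M N := fun p q =>
  ∑ j : Fin (M + N), ∑ l : Fin (M + N),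
    (-1 : ℂ) ^ ((gr M N θ₀ p.2 + gr M N θ₀ l) * (gr M N θ₀ j + gr M N θ₀ q.1)) *
      A p (j, l) * B (j, l) q

/-- The superpermutation `P = Σ_{i,j} (-1)^{[j]} E_{ij} ⊗ E_{ji}`. -/
def P : Mat M N := fun p q =>
  if p.1 = q.2 ∧ p.2 = q.1 then (-1 : ℂ) ^ gr M N θ₀ p.2 else 0

/-- `K = Σ_{i,j} (-1)^{[i][j]} θ_i θ_j E_{j̄ ī} ⊗ E_{ji}`. -/
def K : Mat M N := fun p q =>
  if p.1 = bar M N p.2 ∧ q.1 = bar M N q.2 then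
    (-1 : ℂ) ^ (gr M N θ₀ q.2 * gr M N θ₀ p.2) * th M N q.2 * th M N p.2
  else 0

lemma gr_mul_self (i : Fin (M + N)) : gr M N θ₀ i * gr M N θ₀ i = gr M N θ₀ i := by
  unfold gr; split_ifs <;> rfl

lemma bar_lt_iff (i : Fin (M + N)) : (bar M N i : ℕ) < M ↔ (i : ℕ) < M := by
  unfold bar; split_ifs <;> simp <;> omega

lemma gr_bar (i : Fin (M + N)) : gr M N θ₀ (bar M N i) = gr M N θ₀ i := by
  simp only [gr, bar_lt_iff]

lemma th_mul_self (i : Fin (M + N)) : th M N i * th M N i = 1 := by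
  unfold th; split_ifs <;> norm_num

lemma sum_neg_one_pow_gr (hθ : θ₀ = 1 ∨ θ₀ = -1) :
    ∑ i : Fin (M + N), (-1 : ℂ) ^ gr M N θ₀ i = θ₀ * ((M : ℂ) - N) := by
  rw [Fin.sum_univ_add]
  rcases hθ with rfl | rfl <;> simp [gr] <;> ring

lemma neg_one_pow_sign_cancel {R : Type*} [Monoid R] [HasDistribNeg R] (a b c : ℕ)
    (hc : c * c = c) :
    (-1 : R) ^ ((a + c) * (c + b)) * (-1) ^ (c * a) * (-1) ^ (b * c) = (-1) ^ (b * a) * (-1) ^ c := by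
  have hexp : (a + c) * (c + b) + c * a + b * c = b * a + c + 2 * (a * c + b * c) := by
    rw [show (a + c) * (c + b) + c * a + b * c = b * a + c * c + 2 * (a * c + b * c) by ring, hc]
  rw [← pow_add, ← pow_add, hexp, pow_add _ (b * a + c), pow_mul, neg_one_sq, one_pow, mul_one,
    pow_add]

lemma gmul_K_K_summand (p q : Fin (M + N) × Fin (M + N)) (j l : Fin (M + N)) :
    (-1 : ℂ) ^ ((gr M N θ₀ p.2 + gr M N θ₀ l) * (gr M N θ₀ j + gr M N θ₀ q.1)) *
        K M N θ₀ p (j, l) * K M N θ₀ (j, l) q =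
      if j = bar M N l then (-1 : ℂ) ^ gr M N θ₀ l * K M N θ₀ p q else 0 := by
  obtain ⟨p₁, p₂⟩ := p
  obtain ⟨q₁, q₂⟩ := q
  by_cases hj : j = bar M N l
  swap
  · simp [K, hj]
  subst hj
  by_cases hpq : p₁ = bar M N p₂ ∧ q₁ = bar M N q₂
  swap
  · rcases not_and_or.mp hpq with h | h <;> simp [K, h]
  obtain ⟨rfl, rfl⟩ := hpq
  simp only [K, gr_bar, and_self, if_true]
  have hsign := neg_one_pow_sign_cancel (R := ℂ) (gr M N θ₀ p₂) (gr M N θ₀ q₂) (gr M N θ₀ l)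
    (gr_mul_self M N θ₀ l)
  linear_combination (th M N q₂ * th M N p₂ * th M N l * th M N l) * hsign +
    (-1 : ℂ) ^ (gr M N θ₀ q₂ * gr M N θ₀ p₂) * (-1 : ℂ) ^ gr M N θ₀ l * th M N q₂ * th M N p₂ *
      th_mul_self M N l

lemma gmul_K_K_apply (p q : Fin (M + N) × Fin (M + N)) :
    gmul M N θ₀ (K M N θ₀) (K M N θ₀) p q =
      (∑ i : Fin (M + N), (-1 : ℂ) ^ gr M N θ₀ i) * K M N θ₀ p q := by
  simp only [gmul, gmul_K_K_summand]
  rw [Finset.sum_comm, Finset.sum_mul]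
  simp

theorem statement2 (hθ : θ₀ = 1 ∨ θ₀ = -1) :
    gmul M N θ₀ (K M N θ₀) (K M N θ₀) = ((θ₀ : ℂ) * ((M : ℂ) - (N : ℂ))) • K M N θ₀ := by
  ext p q
  rw [gmul_K_K_apply, sum_neg_one_pow_gr M N θ₀ hθ, Matrix.smul_apply, smul_eq_mul]
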